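/- Let A₁,…,Aₘ be real n×n matrices and let ρ̂(A₁,…,Aₘ) denote the ellipsoid approximation of their joint spectral radius. Then (1/√m)·ρ̂(A₁,…,Aₘ) ≤ ρ(A₁,…,Aₘ) ≤ ρ̂(A₁,…,Aₘ). -/

import Mathlib

open scoped Kronecker

/-- The ℓ₂ operator norm of a square real matrix. -/
noncomputable def l2OpNorm {ι : Type*} [Fintype ι] [DecidableEq ι]
    (A : Matrix ι ι ℝ) : ℝ :=
  ‖Matrix.toEuclideanCLM (𝕜 := ℝ) A‖

/-- The product `A_{σ_k} ⋯ A_{σ_1}` associated to the word `σ`. -/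
noncomputable def wordProd {ι : Type*} [Fintype ι] [DecidableEq ι] {m k : ℕ}
    (A : Fin m → Matrix ι ι ℝ) (σ : Fin k → Fin m) : Matrix ι ι ℝ :=
  (List.ofFn fun i => A (σ i)).reverse.prod

/-- The joint spectral radius of `A₁, …, Aₘ` (w.r.t. the ℓ₂ operator norm). -/
noncomputable def jsr {ι : Type*} [Fintype ι] [DecidableEq ι] {m : ℕ}
    (A : Fin m → Matrix ι ι ℝ) : ℝ :=
  Filter.atTop.limsup fun k : ℕ =>
    ⨆ σ : Fin k → Fin m, l2OpNorm (wordProd A σ) ^ ((1 : ℝ) / (k : ℝ))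

/-- The spectral radius of a single matrix, `ρ(A) = lim_k ‖A^k‖^{1/k}`. -/
noncomputable def specRad {ι : Type*} [Fintype ι] [DecidableEq ι]
    (A : Matrix ι ι ℝ) : ℝ :=
  Filter.atTop.limsup fun k : ℕ => l2OpNorm (A ^ k) ^ ((1 : ℝ) / (k : ℝ))

open scoped Matrix

/-- The ellipsoid approximation of the joint spectral radius of
`A₁, …, Aₘ`. -/
noncomputable def ellips {N m : ℕ} (A : Fin m → Matrix (Fin N) (Fin N) ℝ) :
    ℝ :=
  Real.sqrt (sInf {τ : ℝ | ∃ X : Matrix (Fin N) (Fin N) ℝ, X.PosDef ∧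
    ∀ i, (τ • X - A i * X * (A i)ᵀ).PosSemidef})

section EllipsAuxSection
open Matrix
open scoped Matrix.Norms.L2Operator

noncomputable def en {n : ℕ} (v : Fin n → ℝ) : ℝ := ‖(WithLp.equiv 2 (Fin n → ℝ)).symm v‖

lemma en_nonneg {n : ℕ} (v : Fin n → ℝ) : 0 ≤ en v := norm_nonneg _

lemma en_sq {n : ℕ} (v : Fin n → ℝ) : en v ^ 2 = v ⬝ᵥ v := by
  simp [en, EuclideanSpace.norm_eq, dotProduct, Real.sq_sqrt,
    Finset.sum_nonneg (fun i _ => sq_nonneg (v i)), ← sq]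

lemma en_mulVec_le {n : ℕ} (M : Matrix (Fin n) (Fin n) ℝ) (v : Fin n → ℝ) :
    en (M *ᵥ v) ≤ ‖M‖ * en v := by
  simpa [en] using M.l2_opNorm_mulVec ((WithLp.equiv 2 (Fin n → ℝ)).symm v)

lemma dot_le_en {n : ℕ} (v w : Fin n → ℝ) : v ⬝ᵥ w ≤ en v * en w := by
  have := real_inner_le_norm ((WithLp.equiv 2 (Fin n → ℝ)).symm v) ((WithLp.equiv 2 (Fin n → ℝ)).symm w)
  simpa [en, real_inner_comm, PiLp.inner_apply, RCLike.inner_apply, dotProduct,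
    mul_comm] using this

lemma norm_le_of_quad {n : ℕ} {M : Matrix (Fin n) (Fin n) ℝ} {b : ℝ} (hb : 0 ≤ b)
    (h : ∀ v : Fin n → ℝ, en (M *ᵥ v) ≤ b * en v) : ‖M‖ ≤ b := by
  rw [Matrix.l2_opNorm_def]
  refine ContinuousLinearMap.opNorm_le_bound _ hb fun x => ?_
  have := h ((WithLp.equiv 2 (Fin n → ℝ)) x)
  simp [en] at this; exact this

lemma norm_one_le {n : ℕ} : ‖(1 : Matrix (Fin n) (Fin n) ℝ)‖ ≤ 1 := by
  rw [Matrix.cstar_norm_def, _root_.map_one]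
  exact ContinuousLinearMap.norm_id_le

lemma wordProd_zero {ι : Type*} [Fintype ι] [DecidableEq ι] {m : ℕ}
    (A : Fin m → Matrix ι ι ℝ) (σ : Fin 0 → Fin m) : wordProd A σ = 1 := by
  simp [wordProd]

lemma wordProd_snoc {ι : Type*} [Fintype ι] [DecidableEq ι] {m k : ℕ}
    (A : Fin m → Matrix ι ι ℝ) (σ : Fin k → Fin m) (i : Fin m) :
    wordProd A (Fin.snoc σ i) = A i * wordProd A σ := by
  simp only [wordProd, List.ofFn_succ']
  simp [List.concat_eq_append]

lemma wordProd_eq_snoc {ι : Type*} [Fintype ι] [DecidableEq ι] {m k : ℕ}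
    (A : Fin m → Matrix ι ι ℝ) (σ : Fin (k+1) → Fin m) :
    wordProd A σ = A (σ (Fin.last k)) * wordProd A (Fin.init σ) := by
  conv_lhs => rw [← Fin.snoc_init_self σ]
  rw [wordProd_snoc]

section
variable {n m : ℕ} (A : Fin m → Matrix (Fin n) (Fin n) ℝ)

noncomputable def BB : ℝ := (∑ i, ‖A i‖) + 1

lemma one_le_BB : 1 ≤ BB A := by
  have : 0 ≤ ∑ i, ‖A i‖ := Finset.sum_nonneg fun i _ => norm_nonneg _
  simp [BB]; linarith

lemma norm_le_BB (i : Fin m) : ‖A i‖ ≤ BB A := by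
  have h1 : ‖A i‖ ≤ ∑ j, ‖A j‖ :=
    Finset.single_le_sum (f := fun j => ‖A j‖) (fun j _ => norm_nonneg _) (Finset.mem_univ i)
  simp [BB]; linarith

lemma wordProd_norm_le {k : ℕ} (σ : Fin k → Fin m) : ‖wordProd A σ‖ ≤ BB A ^ k := by
  induction k with
  | zero => simpa [wordProd_zero] using norm_one_le
  | succ k ih =>
    rw [wordProd_eq_snoc, pow_succ']
    calc ‖A (σ (Fin.last k)) * wordProd A (Fin.init σ)‖
        ≤ ‖A (σ (Fin.last k))‖ * ‖wordProd A (Fin.init σ)‖ := Matrix.l2_opNorm_mul _ _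
      _ ≤ BB A * BB A ^ k := by
          apply mul_le_mul (norm_le_BB A _) (ih _) (norm_nonneg _)
          linarith [one_le_BB A]

end

section
variable {n m : ℕ} (A : Fin m → Matrix (Fin n) (Fin n) ℝ)

noncomputable def g (k : ℕ) : ℝ :=
  ⨆ σ : Fin k → Fin m, ‖wordProd A σ‖ ^ ((1 : ℝ) / (k : ℝ))

lemma word_nonempty (hm : 0 < m) (k : ℕ) : Nonempty (Fin k → Fin m) := ⟨fun _ => ⟨0, hm⟩⟩

lemma g_le (hm : 0 < m) (k : ℕ) : g A k ≤ BB A := by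
  have := word_nonempty (m := m) hm k
  refine ciSup_le fun σ => ?_
  rcases Nat.eq_zero_or_pos k with hk | hk
  · subst hk; simp [Real.rpow_zero]; linarith [one_le_BB A]
  · have hB : (0:ℝ) < BB A := lt_of_lt_of_le one_pos (one_le_BB A)
    calc ‖wordProd A σ‖ ^ ((1:ℝ)/(k:ℝ))
        ≤ (BB A ^ k) ^ ((1:ℝ)/(k:ℝ)) := by
          apply Real.rpow_le_rpow (norm_nonneg _) (wordProd_norm_le A σ)
          positivity
      _ = BB A := by
          rw [← Real.rpow_natCast (BB A) k, ← Real.rpow_mul hB.le,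
            mul_one_div_cancel (by exact_mod_cast hk.ne' : (k:ℝ) ≠ 0), Real.rpow_one]

lemma le_g {k : ℕ} (σ : Fin k → Fin m) :
    ‖wordProd A σ‖ ^ ((1 : ℝ) / (k : ℝ)) ≤ g A k :=
  le_ciSup (f := fun σ : Fin k → Fin m => ‖wordProd A σ‖ ^ ((1 : ℝ) / (k : ℝ)))
    (Set.Finite.bddAbove (Set.finite_range _)) σ

lemma g_nonneg (hm : 0 < m) (k : ℕ) : 0 ≤ g A k := by
  have := word_nonempty (m := m) hm k
  exact le_trans (Real.rpow_nonneg (norm_nonneg _) _) (le_g A (Classical.arbitrary _))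

lemma g_bddAbove (hm : 0 < m) : Filter.IsBoundedUnder (· ≤ ·) Filter.atTop (g A) :=
  Filter.isBoundedUnder_of ⟨BB A, g_le A hm⟩

lemma g_bddBelow (hm : 0 < m) : Filter.IsBoundedUnder (· ≥ ·) Filter.atTop (g A) :=
  Filter.isBoundedUnder_of ⟨0, fun k => g_nonneg A hm k⟩

lemma jsr_eq : Filter.atTop.limsup (g A) = Filter.atTop.limsup (g A) := rfl

lemma limsup_g_nonneg (hm : 0 < m) : 0 ≤ Filter.atTop.limsup (g A) :=
  Filter.le_limsup_of_frequently_le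
    (Filter.Frequently.of_forall (g_nonneg A hm)) (g_bddAbove A hm)

end

section
variable {n : ℕ}

lemma conjT_eq (A : Matrix (Fin n) (Fin n) ℝ) : Aᴴ = Aᵀ := by
  ext i j; simp [conjTranspose_apply]

lemma psd_dot {M : Matrix (Fin n) (Fin n) ℝ} (hM : M.PosSemidef) (v : Fin n → ℝ) :
    0 ≤ v ⬝ᵥ (M *ᵥ v) := by simpa using hM.dotProduct_mulVec_nonneg v

lemma psd_of {M : Matrix (Fin n) (Fin n) ℝ} (hH : M.IsHermitian)
    (h : ∀ v, 0 ≤ v ⬝ᵥ (M *ᵥ v)) : M.PosSemidef := Matrix.PosSemidef.of_dotProduct_mulVec_nonneg hH (by simpa using h)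

lemma psd_smul {M : Matrix (Fin n) (Fin n) ℝ} (hM : M.PosSemidef) {c : ℝ} (hc : 0 ≤ c) :
    (c • M).PosSemidef := by
  refine psd_of ?_ fun v => ?_
  · show (c • M)ᴴ = c • M
    rw [conjTranspose_smul, star_trivial, hM.1]
  · rw [smul_mulVec, dotProduct_smul, smul_eq_mul]
    exact mul_nonneg hc (psd_dot hM v)

lemma psd_sum {ι : Type*} (s : Finset ι) (f : ι → Matrix (Fin n) (Fin n) ℝ)
    (h : ∀ i ∈ s, (f i).PosSemidef) : (∑ i ∈ s, f i).PosSemidef := by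
  classical
  induction s using Finset.induction_on with
  | empty => simpa using Matrix.PosSemidef.zero
  | insert _ _ hx ih =>
    rw [Finset.sum_insert hx]
    exact Matrix.PosSemidef.add (h _ (Finset.mem_insert_self _ _))
      (ih fun i hi => h i (Finset.mem_insert_of_mem hi))

lemma dot_quad_conj (P X : Matrix (Fin n) (Fin n) ℝ) (v : Fin n → ℝ) :
    v ⬝ᵥ ((P * X * Pᵀ) *ᵥ v) = (Pᵀ *ᵥ v) ⬝ᵥ (X *ᵥ (Pᵀ *ᵥ v)) := by
  rw [← mulVec_mulVec, ← mulVec_mulVec, dotProduct_mulVec v P, ← mulVec_transpose]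

lemma quad_sub (M N : Matrix (Fin n) (Fin n) ℝ) (v : Fin n → ℝ) :
    v ⬝ᵥ ((M - N) *ᵥ v) = v ⬝ᵥ (M *ᵥ v) - v ⬝ᵥ (N *ᵥ v) := by
  rw [sub_mulVec, dotProduct_sub]

lemma quad_smul (c : ℝ) (M : Matrix (Fin n) (Fin n) ℝ) (v : Fin n → ℝ) :
    v ⬝ᵥ ((c • M) *ᵥ v) = c * (v ⬝ᵥ (M *ᵥ v)) := by
  rw [smul_mulVec, dotProduct_smul, smul_eq_mul]

lemma posDef_bounds {X : Matrix (Fin n) (Fin n) ℝ} (hX : X.PosDef) :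
    ∃ α : ℝ, 0 < α ∧ (∀ v, α * (v ⬝ᵥ v) ≤ v ⬝ᵥ (X *ᵥ v)) ∧
      (∀ v, v ⬝ᵥ (X *ᵥ v) ≤ ‖X‖ * (v ⬝ᵥ v)) := by
  obtain ⟨B, hBB, hBh'⟩ : ∃ B : Matrix (Fin n) (Fin n) ℝ, B * B = X ∧ Bᴴ = B := by
    open scoped MatrixOrder in
    exact ⟨CFC.sqrt X, CFC.sqrt_mul_sqrt_self X hX.posSemidef.nonneg, (CFC.sqrt_nonneg X).posSemidef.1⟩
  have hBh : Bᵀ = B := by rw [← conjT_eq]; exact hBh'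
  have hdet : B.det ≠ 0 := by
    intro h
    have : X.det = 0 := by rw [← hBB, det_mul, h, mul_zero]
    exact (ne_of_gt hX.det_pos) this
  have hinv : ∀ v : Fin n → ℝ, B⁻¹ *ᵥ (B *ᵥ v) = v := fun v => by
    rw [mulVec_mulVec, nonsing_inv_mul _ (isUnit_iff_ne_zero.mpr hdet), one_mulVec]
  have hquad : ∀ v : Fin n → ℝ, v ⬝ᵥ (X *ᵥ v) = en (B *ᵥ v) ^ 2 := fun v => by
    rw [en_sq, ← hBB, ← mulVec_mulVec, dotProduct_mulVec, ← mulVec_transpose, hBh]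
  set c : ℝ := ‖B⁻¹‖ + 1 with hc
  have hc0 : 0 < c := by rw [hc]; positivity
  refine ⟨(c⁻¹)^2, by positivity, fun v => ?_, fun v => ?_⟩
  · have h1 : en v ≤ c * en (B *ᵥ v) := by
      calc en v = en (B⁻¹ *ᵥ (B *ᵥ v)) := by rw [hinv]
        _ ≤ ‖B⁻¹‖ * en (B *ᵥ v) := en_mulVec_le _ _
        _ ≤ c * en (B *ᵥ v) := by
            apply mul_le_mul_of_nonneg_right _ (en_nonneg _); linarith
    have h2 : en v ^ 2 ≤ c^2 * en (B *ᵥ v)^2 := by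
      have := en_nonneg (v := v)
      nlinarith [en_nonneg (v := B *ᵥ v)]
    rw [hquad, ← en_sq]
    calc c⁻¹ ^ 2 * en v ^ 2 ≤ c⁻¹ ^ 2 * (c ^ 2 * en (B *ᵥ v) ^ 2) :=
          mul_le_mul_of_nonneg_left h2 (sq_nonneg c⁻¹)
      _ = (c⁻¹ * c) ^ 2 * en (B *ᵥ v) ^ 2 := by ring
      _ = en (B *ᵥ v) ^ 2 := by rw [inv_mul_cancel₀ hc0.ne', one_pow, one_mul]
  · calc v ⬝ᵥ (X *ᵥ v) ≤ en v * en (X *ᵥ v) := dot_le_en _ _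
      _ ≤ en v * (‖X‖ * en v) := by
          apply mul_le_mul_of_nonneg_left (en_mulVec_le _ _) (en_nonneg _)
      _ = ‖X‖ * (v ⬝ᵥ v) := by rw [← en_sq]; ring

end

section
variable {n m : ℕ} (A : Fin m → Matrix (Fin n) (Fin n) ℝ)

lemma herm_smul_sub {c : ℝ} {X M : Matrix (Fin n) (Fin n) ℝ} (hX : X.IsHermitian)
    (hM : M.IsHermitian) : (c • X - M).IsHermitian := by
  show (c • X - M)ᴴ = _
  rw [conjTranspose_sub, conjTranspose_smul, star_trivial, hX, hM]

lemma herm_conj {X : Matrix (Fin n) (Fin n) ℝ} (hX : X.IsHermitian)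
    (P : Matrix (Fin n) (Fin n) ℝ) : (P * X * Pᵀ).IsHermitian := by
  have := Matrix.isHermitian_mul_mul_conjTranspose P hX
  rwa [conjT_eq] at this

lemma word_psd {m : ℕ} (A : Fin m → Matrix (Fin n) (Fin n) ℝ) {τ : ℝ} (hτ : 0 ≤ τ)
    {X : Matrix (Fin n) (Fin n) ℝ} (hX : X.PosSemidef)
    (h : ∀ i, (τ • X - A i * X * (A i)ᵀ).PosSemidef) :
    ∀ k (σ : Fin k → Fin m),
      ((τ ^ k) • X - wordProd A σ * X * (wordProd A σ)ᵀ).PosSemidef := by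
  intro k
  induction k with
  | zero =>
    intro σ
    simp only [pow_zero, one_smul, wordProd_zero, one_mul, transpose_one, mul_one, sub_self]
    exact Matrix.PosSemidef.zero
  | succ k ih =>
    intro σ
    refine psd_of (herm_smul_sub hX.1 (herm_conj hX.1 _)) fun v => ?_
    rw [quad_sub, quad_smul, sub_nonneg, dot_quad_conj]
    set i := σ (Fin.last k)
    set Q := wordProd A (Fin.init σ)
    set u := (A i)ᵀ *ᵥ v with hu
    have hPt : (wordProd A σ)ᵀ *ᵥ v = Qᵀ *ᵥ u := by
      rw [wordProd_eq_snoc A σ, transpose_mul, ← mulVec_mulVec]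
    have hih : (Qᵀ *ᵥ u) ⬝ᵥ (X *ᵥ (Qᵀ *ᵥ u)) ≤ τ ^ k * (u ⬝ᵥ (X *ᵥ u)) := by
      have := psd_dot (ih (Fin.init σ)) u
      rw [quad_sub, quad_smul, sub_nonneg, dot_quad_conj] at this
      exact this
    have hstep : u ⬝ᵥ (X *ᵥ u) ≤ τ * (v ⬝ᵥ (X *ᵥ v)) := by
      have := psd_dot (h i) v
      rw [quad_sub, quad_smul, sub_nonneg, dot_quad_conj] at this
      exact this
    calc ((wordProd A σ)ᵀ *ᵥ v) ⬝ᵥ (X *ᵥ ((wordProd A σ)ᵀ *ᵥ v))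
        = (Qᵀ *ᵥ u) ⬝ᵥ (X *ᵥ (Qᵀ *ᵥ u)) := by rw [hPt]
      _ ≤ τ ^ k * (u ⬝ᵥ (X *ᵥ u)) := hih
      _ ≤ τ ^ k * (τ * (v ⬝ᵥ (X *ᵥ v))) :=
          mul_le_mul_of_nonneg_left hstep (pow_nonneg hτ k)
      _ = τ ^ (k+1) * (v ⬝ᵥ (X *ᵥ v)) := by ring
lemma word_norm_le {τ α : ℝ} (hτ : 0 ≤ τ) (hα : 0 < α) {X : Matrix (Fin n) (Fin n) ℝ}
    (hlo : ∀ v, α * (v ⬝ᵥ v) ≤ v ⬝ᵥ (X *ᵥ v))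
    (hhi : ∀ v, v ⬝ᵥ (X *ᵥ v) ≤ ‖X‖ * (v ⬝ᵥ v))
    {k : ℕ} {P : Matrix (Fin n) (Fin n) ℝ}
    (hP : ((τ ^ k) • X - P * X * Pᵀ).PosSemidef) :
    ‖P‖ ≤ Real.sqrt (τ ^ k * (‖X‖ / α)) := by
  have hPt : ‖Pᵀ‖ ≤ Real.sqrt (τ ^ k * (‖X‖ / α)) := by
    apply norm_le_of_quad (Real.sqrt_nonneg _)
    intro v
    have h1 : v ⬝ᵥ ((P * X * Pᵀ) *ᵥ v) ≤ τ ^ k * (v ⬝ᵥ (X *ᵥ v)) := by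
      have := psd_dot hP v
      rw [quad_sub, quad_smul] at this
      linarith
    have h2 : α * ((Pᵀ *ᵥ v) ⬝ᵥ (Pᵀ *ᵥ v)) ≤ τ ^ k * (‖X‖ * (v ⬝ᵥ v)) := by
      calc α * ((Pᵀ *ᵥ v) ⬝ᵥ (Pᵀ *ᵥ v)) ≤ (Pᵀ *ᵥ v) ⬝ᵥ (X *ᵥ (Pᵀ *ᵥ v)) := hlo _
        _ = v ⬝ᵥ ((P * X * Pᵀ) *ᵥ v) := (dot_quad_conj P X v).symm
        _ ≤ τ ^ k * (v ⬝ᵥ (X *ᵥ v)) := h1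
        _ ≤ τ ^ k * (‖X‖ * (v ⬝ᵥ v)) :=
            mul_le_mul_of_nonneg_left (hhi v) (pow_nonneg hτ k)
    -- conclude en (Pᵀ *ᵥ v) ≤ sqrt (τ^k * ‖X‖/α) * en v
    have hca : 0 ≤ τ ^ k * (‖X‖ / α) := by positivity
    have h3 : en (Pᵀ *ᵥ v) ^ 2 ≤ (τ ^ k * (‖X‖ / α)) * en v ^ 2 := by
      rw [en_sq, en_sq]
      rw [show τ ^ k * (‖X‖ / α) * (v ⬝ᵥ v) = (τ ^ k * (‖X‖ * (v ⬝ᵥ v))) / α by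
        field_simp]
      rw [le_div_iff₀ hα]
      linarith
    calc en (Pᵀ *ᵥ v) = Real.sqrt (en (Pᵀ *ᵥ v) ^ 2) := (Real.sqrt_sq (en_nonneg _)).symm
      _ ≤ Real.sqrt ((τ ^ k * (‖X‖ / α)) * en v ^ 2) := Real.sqrt_le_sqrt h3
      _ = Real.sqrt (τ ^ k * (‖X‖ / α)) * en v := by
          rw [Real.sqrt_mul hca, Real.sqrt_sq (en_nonneg _)]
  rwa [← conjT_eq, Matrix.l2_opNorm_conjTranspose] at hPt

end

section
open Filter Topology
variable {n m : ℕ}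

lemma upper_aux (hm : 0 < m) (hn : 0 < n) (A : Fin m → Matrix (Fin n) (Fin n) ℝ)
    {τ : ℝ} (X : Matrix (Fin n) (Fin n) ℝ) (hX : X.PosDef)
    (hA : ∀ i, (τ • X - A i * X * (A i)ᵀ).PosSemidef) :
    Filter.atTop.limsup (g A) ≤ Real.sqrt τ := by
  -- the all-ones vector
  set v : Fin n → ℝ := fun _ => 1 with hv
  have hvne : v ≠ 0 := by
    intro h
    have := congrFun h ⟨0, hn⟩
    simp [hv] at this
  have hvv : (0:ℝ) < v ⬝ᵥ v := by
    have : v ⬝ᵥ v = (n : ℝ) := by simp [hv, dotProduct]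
    rw [this]; exact_mod_cast hn
  have hXv : 0 < v ⬝ᵥ (X *ᵥ v) := by simpa using hX.dotProduct_mulVec_pos hvne
  have hτ : 0 ≤ τ := by
    have h1 := psd_dot (hA ⟨0, hm⟩) v
    rw [quad_sub, quad_smul, sub_nonneg, dot_quad_conj] at h1
    have h2 := psd_dot hX.posSemidef (((A ⟨0, hm⟩)ᵀ) *ᵥ v)
    nlinarith
  obtain ⟨α, hα, hlo, hhi⟩ := posDef_bounds hX
  set C : ℝ := ‖X‖ / α with hC
  have hC1 : 1 ≤ C := by
    rw [hC, le_div_iff₀ hα, one_mul]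
    nlinarith [hlo v, hhi v]
  have hC0 : 0 < C := lt_of_lt_of_le one_pos hC1
  have hword : ∀ k (σ : Fin k → Fin m), ‖wordProd A σ‖ ≤ Real.sqrt (τ ^ k * C) :=
    fun k σ => word_norm_le hτ hα hlo hhi (word_psd A hτ hX.posSemidef hA k σ)
  -- comparison sequence
  set h : ℕ → ℝ := fun k => Real.sqrt τ * C ^ ((1:ℝ) / (2 * (k:ℝ))) with hh
  have hgh : ∀ k, 1 ≤ k → g A k ≤ h k := by
    intro k hk
    have hk0 : (k:ℝ) ≠ 0 := by exact_mod_cast (Nat.one_le_iff_ne_zero.mp hk)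
    have := word_nonempty (m := m) hm k
    refine ciSup_le fun σ => ?_
    calc ‖wordProd A σ‖ ^ ((1:ℝ)/(k:ℝ))
        ≤ (Real.sqrt (τ ^ k * C)) ^ ((1:ℝ)/(k:ℝ)) := by
          apply Real.rpow_le_rpow (norm_nonneg _) (hword k σ)
          positivity
      _ = h k := by
          have hbase : (0:ℝ) ≤ τ ^ k * C := by positivity
          rw [hh, Real.sqrt_eq_rpow, ← Real.rpow_mul hbase,
            Real.mul_rpow (pow_nonneg hτ k) hC0.le,
            ← Real.rpow_natCast τ k, ← Real.rpow_mul hτ]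
          rw [show (k:ℝ) * ((1:ℝ)/2 * (1/(k:ℝ))) = 1/2 by field_simp,
            show (1:ℝ)/2 * (1/(k:ℝ)) = 1/(2*(k:ℝ)) by ring]
          simp [Real.sqrt_eq_rpow]
  have he : Tendsto (fun k : ℕ => (1:ℝ)/(2*(k:ℝ))) atTop (𝓝 0) := by
    have h1 : Tendsto (fun k : ℕ => (1/2:ℝ) * (1/(k:ℝ))) atTop (𝓝 ((1/2) * 0)) :=
      tendsto_one_div_atTop_nhds_zero_nat.const_mul _
    rw [mul_zero] at h1
    refine h1.congr fun k => by ring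
  have hCt : Tendsto (fun k : ℕ => C ^ ((1:ℝ)/(2*(k:ℝ)))) atTop (𝓝 1) := by
    have := (Real.continuousAt_const_rpow (b := (0:ℝ)) hC0.ne').tendsto.comp he
    simpa [Function.comp_def, Real.rpow_zero] using this
  have hht : Tendsto h atTop (𝓝 (Real.sqrt τ)) := by
    have := hCt.const_mul (Real.sqrt τ)
    rw [mul_one] at this
    exact this
  calc Filter.atTop.limsup (g A)
      ≤ Filter.atTop.limsup h := by
        apply Filter.limsup_le_limsup (Filter.eventually_atTop.mpr ⟨1, hgh⟩)
          ((g_bddBelow A hm).isCoboundedUnder_le) (hht.isBoundedUnder_le)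
    _ = Real.sqrt τ := hht.limsup_eq
end

section
open Filter Topology Finset
variable {n m : ℕ}

lemma quad_add (M N : Matrix (Fin n) (Fin n) ℝ) (v : Fin n → ℝ) :
    v ⬝ᵥ ((M + N) *ᵥ v) = v ⬝ᵥ (M *ᵥ v) + v ⬝ᵥ (N *ᵥ v) := by
  rw [add_mulVec, dotProduct_add]

lemma quad_sum {ι : Type*} (s : Finset ι) (f : ι → Matrix (Fin n) (Fin n) ℝ) (v : Fin n → ℝ) :
    v ⬝ᵥ ((∑ i ∈ s, f i) *ᵥ v) = ∑ i ∈ s, v ⬝ᵥ (f i *ᵥ v) := by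
  classical
  induction s using Finset.induction_on with
  | empty => simp
  | insert _ _ hx ih => rw [Finset.sum_insert hx, Finset.sum_insert hx, quad_add, ih]

lemma dot_self_pos {v : Fin n → ℝ} (hv : v ≠ 0) : 0 < v ⬝ᵥ v := by
  obtain ⟨j, hj⟩ := Function.ne_iff.mp hv
  exact Finset.sum_pos' (fun i _ => mul_self_nonneg _)
    ⟨j, Finset.mem_univ j, mul_self_pos.mpr (by simpa using hj)⟩

lemma lower_aux (hm : 0 < m) (A : Fin m → Matrix (Fin n) (Fin n) ℝ)
    {r : ℝ} (hr : Filter.atTop.limsup (g A) < r) :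
    ∃ X : Matrix (Fin n) (Fin n) ℝ, X.PosDef ∧
      ∀ i, (((m : ℝ) * r ^ 2) • X - A i * X * (A i)ᵀ).PosSemidef := by
  have hjsr0 := limsup_g_nonneg A hm
  have hr0 : 0 < r := lt_of_le_of_lt hjsr0 hr
  set r' : ℝ := (Filter.atTop.limsup (g A) + r) / 2 with hr'def
  have hr'0 : 0 < r' := by rw [hr'def]; linarith
  have hr'lt : r' < r := by rw [hr'def]; linarith
  have hlim : Filter.atTop.limsup (g A) < r' := by rw [hr'def]; linarith
  have hev : ∀ᶠ k in Filter.atTop, g A k < r' :=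
    Filter.eventually_lt_of_limsup_lt hlim (g_bddAbove A hm)
  obtain ⟨K0, hK0⟩ := Filter.eventually_atTop.mp hev
  set K : ℕ := max K0 1 with hKdef
  have hK1 : 1 ≤ K := le_max_right _ _
  have hword : ∀ k, K ≤ k → ∀ σ : Fin k → Fin m, ‖wordProd A σ‖ ≤ r' ^ k := by
    intro k hk σ
    have hk1 : 1 ≤ k := le_trans hK1 hk
    have hkr : (k:ℝ) ≠ 0 := by exact_mod_cast (Nat.one_le_iff_ne_zero.mp hk1)
    have h1 : ‖wordProd A σ‖ ^ ((1:ℝ)/(k:ℝ)) < r' :=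
      lt_of_le_of_lt (le_g A σ) (hK0 k (le_trans (le_max_left _ _) hk))
    have h2 : (‖wordProd A σ‖ ^ ((1:ℝ)/(k:ℝ))) ^ (k:ℕ) = ‖wordProd A σ‖ := by
      rw [← Real.rpow_natCast (‖wordProd A σ‖ ^ ((1:ℝ)/(k:ℝ))) k,
        ← Real.rpow_mul (norm_nonneg _), one_div, inv_mul_cancel₀ hkr, Real.rpow_one]
    calc ‖wordProd A σ‖ = (‖wordProd A σ‖ ^ ((1:ℝ)/(k:ℝ))) ^ (k:ℕ) := h2.symm
      _ ≤ r' ^ k := pow_le_pow_left₀ (Real.rpow_nonneg (norm_nonneg _) _) h1.le k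
  set c : ℝ := (m : ℝ) * r ^ 2 with hcdef
  have hc0 : 0 < c := by
    have hm' : (0:ℝ) < m := by exact_mod_cast hm
    rw [hcdef]; exact mul_pos hm' (pow_pos hr0 2)
  set S : ∀ k : ℕ, Matrix (Fin n) (Fin n) ℝ :=
    fun k => ∑ σ : Fin k → Fin m, wordProd A σ * (wordProd A σ)ᵀ with hSdef
  have S_psd : ∀ k, (S k).PosSemidef := by
    intro k
    refine psd_sum _ _ fun σ _ => ?_
    have := Matrix.posSemidef_self_mul_conjTranspose (wordProd A σ)
    rwa [conjT_eq] at this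
  have S_zero : S 0 = 1 := by
    simp only [hSdef, wordProd_zero, transpose_one, mul_one]
    rw [Finset.sum_const, Finset.card_univ, Fintype.card_pi_const]
    simp
  have S_succ : ∀ k, S (k+1) = ∑ i, A i * S k * (A i)ᵀ := by
    intro k
    let e : (Fin m × (Fin k → Fin m)) ≃ (Fin (k+1) → Fin m) :=
      { toFun := fun p => Fin.snoc p.2 p.1
        invFun := fun σ => (σ (Fin.last k), Fin.init σ)
        left_inv := fun p => by simp
        right_inv := fun σ => Fin.snoc_init_self σ }
    simp only [hSdef]
    rw [← Equiv.sum_comp e (fun σ : Fin (k+1) → Fin m => wordProd A σ * (wordProd A σ)ᵀ)]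
    rw [Fintype.sum_prod_type]
    refine Finset.sum_congr rfl fun i _ => ?_
    simp only [e, Equiv.coe_fn_mk, wordProd_snoc, transpose_mul]
    rw [Finset.mul_sum, Finset.sum_mul]
    refine Finset.sum_congr rfl fun σ _ => by simp only [mul_assoc]
  set X : Matrix (Fin n) (Fin n) ℝ :=
    ∑ k ∈ Finset.range (K+1), (c⁻¹)^k • S k with hXdef
  have hXpsd : X.PosSemidef :=
    psd_sum _ _ fun k _ => psd_smul (S_psd k) (by positivity)
  have hX1 : X = (∑ k ∈ Finset.range K, (c⁻¹)^(k+1) • S (k+1)) + 1 := by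
    rw [hXdef, Finset.sum_range_succ' (fun k => (c⁻¹)^k • S k) K]
    rw [pow_zero, one_smul, S_zero]
  have hXpd : X.PosDef := by
    refine Matrix.PosDef.of_dotProduct_mulVec_pos hXpsd.1 fun v hv => ?_
    have h1 : 0 ≤ v ⬝ᵥ ((∑ k ∈ Finset.range K, (c⁻¹)^(k+1) • S (k+1)) *ᵥ v) :=
      psd_dot (psd_sum _ _ fun k _ => psd_smul (S_psd (k+1)) (by positivity)) v
    have h2 : (0:ℝ) < v ⬝ᵥ v := dot_self_pos hv
    have : v ⬝ᵥ (X *ᵥ v) =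
        v ⬝ᵥ ((∑ k ∈ Finset.range K, (c⁻¹)^(k+1) • S (k+1)) *ᵥ v) + v ⬝ᵥ v := by
      rw [hX1, quad_add, one_mulVec]
    simp only [star_trivial]
    rw [this]
    linarith
  refine ⟨X, hXpd, ?_⟩
  -- total sum T
  set T : Matrix (Fin n) (Fin n) ℝ := ∑ i, A i * X * (A i)ᵀ with hTdef
  have key1 : T = ∑ k ∈ Finset.range (K+1), (c⁻¹)^k • S (k+1) := by
    rw [hTdef, hXdef]
    simp only [Finset.mul_sum, Finset.sum_mul, mul_smul_comm, smul_mul_assoc]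
    rw [Finset.sum_comm]
    refine Finset.sum_congr rfl fun k _ => ?_
    rw [← Finset.smul_sum, S_succ]
  have hsc : ∀ j : ℕ, c • ((c⁻¹)^(j+1) • S (j+1)) = (c⁻¹)^j • S (j+1) := by
    intro j
    rw [smul_smul, pow_succ, ← mul_assoc, mul_comm c, mul_assoc, mul_inv_cancel₀ hc0.ne',
      mul_one]
  have key2 : c • X - T = c • 1 - (c⁻¹)^K • S (K+1) := by
    rw [key1, hXdef, Finset.smul_sum, Finset.sum_range_succ' (fun k => c • ((c⁻¹)^k • S k)) K,
      Finset.sum_range_succ (fun k => (c⁻¹)^k • S (k+1)) K]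
    simp only [hsc, pow_zero, one_smul, S_zero]
    abel
  have claim1 : (c • X - T).PosSemidef := by
    rw [key2]
    refine psd_of (herm_smul_sub Matrix.isHermitian_one
      (psd_smul (S_psd (K+1)) (by positivity)).1) fun v => ?_
    rw [quad_sub, quad_smul, quad_smul, one_mulVec, sub_nonneg]
    have hbound : v ⬝ᵥ (S (K+1) *ᵥ v) ≤ (m:ℝ)^(K+1) * (r'^2)^(K+1) * (v ⬝ᵥ v) := by
      rw [hSdef, quad_sum]
      have hterm : ∀ σ : Fin (K+1) → Fin m,
          v ⬝ᵥ ((wordProd A σ * (wordProd A σ)ᵀ) *ᵥ v) ≤ (r'^2)^(K+1) * (v ⬝ᵥ v) := by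
        intro σ
        have hq : v ⬝ᵥ ((wordProd A σ * (wordProd A σ)ᵀ) *ᵥ v)
            = en ((wordProd A σ)ᵀ *ᵥ v) ^ 2 := by
          rw [show wordProd A σ * (wordProd A σ)ᵀ = wordProd A σ * 1 * (wordProd A σ)ᵀ by
            rw [mul_one], dot_quad_conj, en_sq, one_mulVec]
        rw [hq]
        have h1 : en ((wordProd A σ)ᵀ *ᵥ v) ≤ r'^(K+1) * en v := by
          calc en ((wordProd A σ)ᵀ *ᵥ v) ≤ ‖(wordProd A σ)ᵀ‖ * en v := en_mulVec_le _ _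
            _ ≤ r'^(K+1) * en v := by
                apply mul_le_mul_of_nonneg_right _ (en_nonneg _)
                rw [← conjT_eq, Matrix.l2_opNorm_conjTranspose]
                exact hword (K+1) (Nat.le_succ K) σ
        calc en ((wordProd A σ)ᵀ *ᵥ v) ^ 2 ≤ (r'^(K+1) * en v)^2 := by
              have := en_nonneg (v := (wordProd A σ)ᵀ *ᵥ v)
              nlinarith [en_nonneg (v := v), pow_nonneg hr'0.le (K+1)]
          _ = (r'^2)^(K+1) * (v ⬝ᵥ v) := by
                rw [mul_pow, en_sq, ← pow_mul, ← pow_mul, Nat.mul_comm 2 (K+1)]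
      calc ∑ σ : Fin (K+1) → Fin m, v ⬝ᵥ ((wordProd A σ * (wordProd A σ)ᵀ) *ᵥ v)
          ≤ ∑ _σ : Fin (K+1) → Fin m, (r'^2)^(K+1) * (v ⬝ᵥ v) :=
            Finset.sum_le_sum fun σ _ => hterm σ
        _ = (m:ℝ)^(K+1) * (r'^2)^(K+1) * (v ⬝ᵥ v) := by
            rw [Finset.sum_const, Finset.card_univ, Fintype.card_pi_const]
            simp [Fintype.card_fin]
            ring
    have hfinal : (c⁻¹)^K * ((m:ℝ)^(K+1) * (r'^2)^(K+1)) ≤ c := by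
      have h1 : (m:ℝ)^(K+1) * (r'^2)^(K+1) ≤ c^(K+1) := by
        rw [hcdef, mul_pow]
        apply mul_le_mul_of_nonneg_left _ (by positivity)
        exact pow_le_pow_left₀ (by positivity) (by nlinarith) (K+1)
      calc (c⁻¹)^K * ((m:ℝ)^(K+1) * (r'^2)^(K+1)) ≤ (c⁻¹)^K * c^(K+1) := by
            apply mul_le_mul_of_nonneg_left h1 (by positivity)
        _ = c := by
            rw [pow_succ, ← mul_assoc, ← mul_pow, inv_mul_cancel₀ hc0.ne', one_pow, one_mul]
    calc (c⁻¹)^K * (v ⬝ᵥ (S (K+1) *ᵥ v))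
        ≤ (c⁻¹)^K * ((m:ℝ)^(K+1) * (r'^2)^(K+1) * (v ⬝ᵥ v)) := by
          apply mul_le_mul_of_nonneg_left hbound (by positivity)
      _ = ((c⁻¹)^K * ((m:ℝ)^(K+1) * (r'^2)^(K+1))) * (v ⬝ᵥ v) := by ring
      _ ≤ c * (v ⬝ᵥ v) := by
          apply mul_le_mul_of_nonneg_right hfinal
          exact psd_dot Matrix.PosSemidef.one v |>.trans_eq (by rw [one_mulVec])
  intro i
  have hsplit : c • X - A i * X * (A i)ᵀ
      = (c • X - T) + ∑ j ∈ Finset.univ.erase i, A j * X * (A j)ᵀ := by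
    rw [hTdef, ← Finset.add_sum_erase _ _ (Finset.mem_univ i)]
    abel
  rw [hsplit]
  refine Matrix.PosSemidef.add claim1 (psd_sum _ _ fun j _ => ?_)
  have := hXpsd.mul_mul_conjTranspose_same (A j)
  rwa [conjT_eq] at this

end

section
open Filter Topology
variable {n m : ℕ}

lemma jsr_eq_g (A : Fin m → Matrix (Fin n) (Fin n) ℝ) :
    jsr A = Filter.atTop.limsup (g A) := rfl

lemma mem_nonneg (hm : 0 < m) (hn : 0 < n) (A : Fin m → Matrix (Fin n) (Fin n) ℝ)
    {τ : ℝ} (hτ : τ ∈ {τ : ℝ | ∃ X : Matrix (Fin n) (Fin n) ℝ, X.PosDef ∧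
      ∀ i, (τ • X - A i * X * (A i)ᵀ).PosSemidef}) : 0 ≤ τ := by
  obtain ⟨X, hX, hA⟩ := hτ
  set v : Fin n → ℝ := fun _ => 1 with hv
  have hvne : v ≠ 0 := by
    intro h
    have := congrFun h ⟨0, hn⟩
    simp [hv] at this
  have hXv : 0 < v ⬝ᵥ (X *ᵥ v) := by simpa using hX.dotProduct_mulVec_pos hvne
  have h1 := psd_dot (hA ⟨0, hm⟩) v
  rw [quad_sub, quad_smul, sub_nonneg, dot_quad_conj] at h1
  have h2 := psd_dot hX.posSemidef (((A ⟨0, hm⟩)ᵀ) *ᵥ v)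
  nlinarith

theorem ellips_accuracy' (hm : 0 < m)
    (A : Fin m → Matrix (Fin n) (Fin n) ℝ) :
    (1 / Real.sqrt m) * ellips A ≤ jsr A ∧ jsr A ≤ ellips A := by
  set Sset := {τ : ℝ | ∃ X : Matrix (Fin n) (Fin n) ℝ, X.PosDef ∧
    ∀ i, (τ • X - A i * X * (A i)ᵀ).PosSemidef} with hSset
  have hL0 : 0 ≤ Filter.atTop.limsup (g A) := limsup_g_nonneg A hm
  rcases Nat.eq_zero_or_pos n with hn | hn
  · -- degenerate case n = 0
    subst hn
    have hsub : ∀ M : Matrix (Fin 0) (Fin 0) ℝ, M = 0 := fun M => by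
      ext i j; exact absurd i.2 (Nat.not_lt_zero _)
    have hmem : ∀ τ : ℝ, τ ∈ Sset := by
      intro τ
      refine ⟨1, Matrix.PosDef.one, fun i => ?_⟩
      rw [hsub (τ • 1 - A i * 1 * (A i)ᵀ)]
      exact Matrix.PosSemidef.zero
    have hnb : ¬ BddBelow Sset := by
      rintro ⟨b, hb⟩
      have := hb (hmem (b - 1))
      linarith
    have he : ellips A = 0 := by
      rw [ellips, Real.sInf_of_not_bddBelow hnb, Real.sqrt_zero]
    have hg0 : ∀ k, 1 ≤ k → g A k = 0 := by
      intro k hk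
      have : ∀ σ : Fin k → Fin m, ‖wordProd A σ‖ ^ ((1:ℝ)/(k:ℝ)) = 0 := by
        intro σ
        rw [hsub (wordProd A σ), norm_zero, Real.zero_rpow]
        simp
        exact_mod_cast Nat.one_le_iff_ne_zero.mp hk
      have hne := word_nonempty (m := m) hm k
      rw [g]
      rw [funext this]
      exact ciSup_const
    have hjsr : jsr A = 0 := by
      rw [jsr_eq_g]
      have : Filter.atTop.limsup (g A) = Filter.atTop.limsup (fun _ : ℕ => (0:ℝ)) := by
        apply Filter.limsup_congr
        filter_upwards [Filter.eventually_ge_atTop 1] with k hk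
        exact hg0 k hk
      rw [this, Filter.limsup_const]
    rw [hjsr, he]
    norm_num
  · -- main case n > 0
    set L := Filter.atTop.limsup (g A) with hLdef
    have hbdd : BddBelow Sset := ⟨0, fun τ hτ => mem_nonneg hm hn A hτ⟩
    have hmemr : ∀ r : ℝ, L < r → ((m:ℝ) * r^2) ∈ Sset := by
      intro r hr
      obtain ⟨X, hX, hA⟩ := lower_aux hm A hr
      exact ⟨X, hX, hA⟩
    have hSne : Sset.Nonempty := ⟨_, hmemr (L+1) (by linarith)⟩
    constructor
    · -- lower bound
      have h1 : ∀ r ∈ Set.Ioi L, sInf Sset ≤ (m:ℝ) * r^2 := fun r hr =>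
        csInf_le hbdd (hmemr r hr)
      have ht : Filter.Tendsto (fun r : ℝ => (m:ℝ) * r^2) (𝓝[>] L) (𝓝 ((m:ℝ)*L^2)) :=
        ((continuous_const.mul (continuous_pow 2)).tendsto L).mono_left nhdsWithin_le_nhds
      have h2 : sInf Sset ≤ (m:ℝ) * L^2 :=
        ge_of_tendsto ht (eventually_mem_nhdsWithin.mono h1)
      have h3 : ellips A ≤ Real.sqrt ((m:ℝ) * L^2) := Real.sqrt_le_sqrt h2
      have h4 : Real.sqrt ((m:ℝ) * L^2) = Real.sqrt m * L := by
        rw [Real.sqrt_mul (by positivity), Real.sqrt_sq hL0]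
      have hsm : (0:ℝ) < Real.sqrt m := Real.sqrt_pos.mpr (by exact_mod_cast hm)
      rw [jsr_eq_g, ← hLdef]
      calc (1 / Real.sqrt m) * ellips A ≤ (1 / Real.sqrt m) * (Real.sqrt m * L) := by
            apply mul_le_mul_of_nonneg_left _ (by positivity)
            rw [← h4]; exact h3
        _ = L := by field_simp
    · -- upper bound
      have hub : ∀ τ ∈ Sset, L ≤ Real.sqrt τ := by
        rintro τ ⟨X, hX, hA⟩
        exact upper_aux hm hn A X hX hA
      have h5 : L^2 ≤ sInf Sset := by
        apply le_csInf hSne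
        intro τ hτ
        have h6 := hub τ hτ
        have h7 : L^2 ≤ (Real.sqrt τ)^2 := by
          apply pow_le_pow_left₀ hL0 h6
        rwa [Real.sq_sqrt (mem_nonneg hm hn A hτ)] at h7
      rw [jsr_eq_g, ← hLdef, ellips]
      calc L = Real.sqrt (L^2) := (Real.sqrt_sq hL0).symm
        _ ≤ Real.sqrt (sInf Sset) := Real.sqrt_le_sqrt h5
end

end EllipsAuxSection

open scoped Matrix.Norms.L2Operator in
/-- `(1/√m) ρ̂(A₁, …, Aₘ) ≤ ρ(A₁, …, Aₘ) ≤ ρ̂(A₁, …, Aₘ)`. -/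
theorem ellips_accuracy {n m : ℕ} (hm : 0 < m)
    (A : Fin m → Matrix (Fin n) (Fin n) ℝ) :
    (1 / Real.sqrt m) * ellips A ≤ jsr A ∧ jsr A ≤ ellips A :=
  ellips_accuracy' hm A
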